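/- arXiv:2112.01946 — 7 statements merged into one kernel-verified Lean document; each statement's English description precedes it below -/
import Mathlib

section
/- Let n ≥ 3, k ≥ 3, and let R ∈ S_k be a non-monotone permutation pattern. If S is a family of permutations of [n] such that every k-subset of [n] follows the pattern R in at least one permutation of S, then |S| ≥ log₂(n - k + 2). -/
/-- The strict order induced on a subset `X` of `[n]` by a permutation `P`
(thought of as assigning each element its position): `a` before `b` iff `P a < P b`. -/
def ordOn {n : ℕ} (P : Equiv.Perm (Fin n)) (X : Finset (Fin n)) :
    ↥X → ↥X → Prop :=
  fun a b => P a.val < P b.val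

/-- The set of orders (patterns) realized on `X` by a family `S` of permutations. -/
def realized {n : ℕ} (S : Set (Equiv.Perm (Fin n))) (X : Finset (Fin n)) :
    Set (↥X → ↥X → Prop) :=
  (fun P => ordOn P X) '' S

/-- `X` (a `k`-subset of `[n]`) follows the pattern `R ∈ S_k` in the permutation `P`:
with `a_1 < ⋯ < a_k` the elements of `X`, `pos(P,a_i) < pos(P,a_j) ↔ pos(R,i) < pos(R,j)`. -/
def FollowsPattern {n k : ℕ} (P : Equiv.Perm (Fin n)) (X : Finset (Fin n))
    (h : X.card = k) (R : Equiv.Perm (Fin k)) : Prop :=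
  ∀ i j : Fin k, R i < R j ↔ P (X.orderIsoOfFin h i).val < P (X.orderIsoOfFin h j).val

lemma exists_between_adj {k : ℕ} (hk : 3 ≤ k) (R : Equiv.Perm (Fin k))
    (h1 : ¬ Monotone ⇑R) (h2 : ¬ Antitone ⇑R) :
    ∃ p : ℕ, ∃ hp : p + 1 < k, ∃ i : Fin k,
      (R ⟨p, by omega⟩ < R i ∧ R i < R ⟨p+1, hp⟩) ∨
      (R ⟨p+1, hp⟩ < R i ∧ R i < R ⟨p, by omega⟩) := by
  by_contra hcon
  push_neg at hcon
  set g : ℕ → ℕ := fun i => if h : i < k then (R ⟨i, h⟩).val else 0 with hg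
  have hgval : ∀ i (h : i < k), g i = (R ⟨i, h⟩).val := by
    intro i h; simp [hg, h]
  have hglt : ∀ i, i < k → g i < k := by
    intro i h; rw [hgval i h]; exact (R ⟨i, h⟩).isLt
  have hinj : ∀ i j, i < k → j < k → g i = g j → i = j := by
    intro i j hi hj hij
    rw [hgval i hi, hgval j hj] at hij
    have := R.injective (Fin.ext hij)
    exact congrArg Fin.val this
  have hstep : ∀ i, i + 1 < k → g (i+1) = g i + 1 ∨ g i = g (i+1) + 1 := by
    intro i hi
    have hi' : i < k := by omega
    have hne : g i ≠ g (i+1) := fun h => by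
      have := hinj i (i+1) hi' hi h; omega
    rcases Nat.lt_or_ge (g i) (g (i+1)) with hlt | hge
    · -- ascending: show +1
      by_contra hne2
      have hgap : g i + 1 < g (i+1) := by omega
      have hb : g i + 1 < k := by have := hglt (i+1) hi; omega
      set w := R.symm ⟨g i + 1, hb⟩ with hw
      have hRw : R w = ⟨g i + 1, hb⟩ := R.apply_symm_apply _
      have hA : R ⟨i, by omega⟩ < R w := by
        rw [Fin.lt_iff_val_lt_val, hRw]
        have := hgval i hi'; simp only [← this]; omega
      have hB : R w < R ⟨i+1, hi⟩ := by
        rw [Fin.lt_iff_val_lt_val, hRw]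
        have := hgval (i+1) hi; simp only [← this]; omega
      exact absurd ((hcon i hi w).1 hA) (not_le.mpr hB)
    · -- descending: show g i = g (i+1) + 1
      right
      by_contra hne2
      have hgap : g (i+1) + 1 < g i := by omega
      have hb : g (i+1) + 1 < k := by have := hglt i hi'; omega
      set w := R.symm ⟨g (i+1) + 1, hb⟩ with hw
      have hRw : R w = ⟨g (i+1) + 1, hb⟩ := R.apply_symm_apply _
      have hA : R ⟨i+1, hi⟩ < R w := by
        rw [Fin.lt_iff_val_lt_val, hRw]
        have := hgval (i+1) hi; simp only [← this]; omega
      have hB : R w < R ⟨i, hi'⟩ := by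
        rw [Fin.lt_iff_val_lt_val, hRw]
        have := hgval i hi'; simp only [← this]; omega
      exact absurd ((hcon i hi w).2 hA) (not_le.mpr hB)
  have h01 : 1 < k := by omega
  rcases hstep 0 (by omega) with hup | hdown
  · -- all ascending: R = id, contradicting h1
    have key : ∀ i, i + 1 < k → g i = g 0 + i ∧ g (i+1) = g 0 + (i+1) := by
      intro i
      induction i with
      | zero => intro _; exact ⟨by omega, by omega⟩
      | succ j ih =>
        intro hj2
        have hj1 : j + 1 < k := by omega
        obtain ⟨e1, e2⟩ := ih hj1
        refine ⟨e2, ?_⟩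
        rcases hstep (j+1) hj2 with h | h
        · omega
        · exfalso
          have heq : g (j+1+1) = g j := by omega
          have := hinj (j+1+1) j (by omega) (by omega) heq
          omega
    have keyall : ∀ i, i < k → g i = g 0 + i := by
      intro i hi
      rcases Nat.eq_zero_or_pos i with rfl | hpos
      · omega
      · obtain ⟨j, rfl⟩ := Nat.exists_eq_succ_of_ne_zero (by omega : i ≠ 0)
        exact (key j hi).2
    have hg0 : g 0 = 0 := by
      have h1k : k - 1 < k := by omega
      have := keyall (k-1) h1k
      have := hglt (k-1) h1k
      omega
    refine h1 (fun a b hab => ?_)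
    have ha := hgval a.val a.isLt
    have hb := hgval b.val b.isLt
    have ha' := keyall a.val a.isLt
    have hb' := keyall b.val b.isLt
    have : (R a).val ≤ (R b).val := by
      have : (⟨a.val, a.isLt⟩ : Fin k) = a := rfl
      simp only [Fin.eta] at ha hb
      omega
    exact this
  · -- all descending: R = reversal, contradicting h2
    have key : ∀ i, i + 1 < k → g i + i = g 0 ∧ g (i+1) + (i+1) = g 0 := by
      intro i
      induction i with
      | zero => intro _; exact ⟨by omega, by omega⟩
      | succ j ih =>
        intro hj2
        have hj1 : j + 1 < k := by omega
        obtain ⟨e1, e2⟩ := ih hj1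
        refine ⟨e2, ?_⟩
        rcases hstep (j+1) hj2 with h | h
        · exfalso
          have heq : g (j+1+1) = g j := by omega
          have := hinj (j+1+1) j (by omega) (by omega) heq
          omega
        · omega
    have keyall : ∀ i, i < k → g i + i = g 0 := by
      intro i hi
      rcases Nat.eq_zero_or_pos i with rfl | hpos
      · omega
      · obtain ⟨j, rfl⟩ := Nat.exists_eq_succ_of_ne_zero (by omega : i ≠ 0)
        exact (key j hi).2
    refine h2 (fun a b hab => ?_)
    have ha := hgval a.val a.isLt
    have hb := hgval b.val b.isLt
    have ha' := keyall a.val a.isLt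
    have hb' := keyall b.val b.isLt
    have : (R b).val ≤ (R a).val := by
      simp only [Fin.eta] at ha hb
      omega
    exact this

def eN (n k p a b : ℕ) (j : Fin k) : ℕ :=
  if j.val < p then j.val
  else if j.val = p then p + a
  else if j.val = p + 1 then p + b
  else (n - k) + j.val

lemma eN_lt {n k p a b : ℕ} (hp : p + 1 < k) (hkn : k ≤ n)
    (ha : a < n - k + 2) (hb : b < n - k + 2) (j : Fin k) : eN n k p a b j < n := by
  have := j.isLt; unfold eN; split_ifs <;> omega

def eF (n k p a b : ℕ) (hp : p + 1 < k) (hkn : k ≤ n)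
    (ha : a < n - k + 2) (hb : b < n - k + 2) (j : Fin k) : Fin n :=
  ⟨eN n k p a b j, eN_lt hp hkn ha hb j⟩

lemma eF_strictMono {n k p a b : ℕ} (hp : p + 1 < k) (hkn : k ≤ n)
    (ha : a < n - k + 2) (hb : b < n - k + 2) (hab : a < b) :
    StrictMono (eF n k p a b hp hkn ha hb) := by
  intro x y hxy
  have hx := x.isLt; have hy := y.isLt
  have hxy' : x.val < y.val := hxy
  simp only [eF, Fin.mk_lt_mk, eN]
  split_ifs <;> omega

lemma eF_val_p {n k p a b : ℕ} (hp : p + 1 < k) (hkn : k ≤ n)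
    (ha : a < n - k + 2) (hb : b < n - k + 2) :
    (eF n k p a b hp hkn ha hb ⟨p, by omega⟩).val = p + a := by
  simp [eF, eN]

lemma eF_val_p1 {n k p a b : ℕ} (hp : p + 1 < k) (hkn : k ≤ n)
    (ha : a < n - k + 2) (hb : b < n - k + 2) :
    (eF n k p a b hp hkn ha hb ⟨p + 1, hp⟩).val = p + b := by
  simp [eF, eN]

lemma eF_val_i {n k p a b : ℕ} (hp : p + 1 < k) (hkn : k ≤ n)
    (ha : a < n - k + 2) (hb : b < n - k + 2) (i : Fin k)
    (h1 : i.val ≠ p) (h2 : i.val ≠ p + 1) :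
    (eF n k p a b hp hkn ha hb i).val = if i.val < p then i.val else (n - k) + i.val := by
  simp only [eF, eN]
  split_ifs <;> omega

/-- if `R ∈ S_k` is non-monotone and every `k`-subset of `[n]` follows `R`
in some permutation of the family `S`, then `|S| ≥ log₂(n - k + 2)`. -/
theorem stmt_5 (n k : ℕ) (hn : 3 ≤ n) (hk : 3 ≤ k) (hkn : k ≤ n)
    (R : Equiv.Perm (Fin k)) (hR : ¬ Monotone ⇑R ∧ ¬ Antitone ⇑R)
    (S : Finset (Equiv.Perm (Fin n)))
    (hS : ∀ (X : Finset (Fin n)) (h : X.card = k), ∃ P ∈ S, FollowsPattern P X h R) :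
    Real.logb 2 ((n : ℝ) - k + 2) ≤ S.card := by
  obtain ⟨hR1, hR2⟩ := hR
  obtain ⟨p, hp, i₀, hbet⟩ := exists_between_adj hk R hR1 hR2
  have hv1 : i₀.val ≠ p := by
    intro h
    have : i₀ = (⟨p, by omega⟩ : Fin k) := Fin.ext h
    rw [this] at hbet
    rcases hbet with ⟨h', _⟩ | ⟨_, h'⟩ <;> exact lt_irrefl _ h'
  have hv2 : i₀.val ≠ p + 1 := by
    intro h
    have : i₀ = (⟨p + 1, hp⟩ : Fin k) := Fin.ext h
    rw [this] at hbet
    rcases hbet with ⟨_, h'⟩ | ⟨h', _⟩ <;> exact lt_irrefl _ h'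
  have hclt : (if i₀.val < p then i₀.val else (n - k) + i₀.val) < n := by
    have := i₀.isLt; split_ifs <;> omega
  set c : Fin n := ⟨_, hclt⟩ with hc
  have hA : ∀ a : Fin (n - k + 2), p + a.val < n := by
    intro a; have := a.isLt; omega
  -- key covering fact
  have key : ∀ a b : Fin (n - k + 2), a.val < b.val → ∃ P ∈ S,
      ((R ⟨p, by omega⟩ < R i₀) ↔ P ⟨p + a.val, hA a⟩ < P c) ∧
      ((R ⟨p + 1, hp⟩ < R i₀) ↔ P ⟨p + b.val, hA b⟩ < P c) := by
    intro a b hab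
    have ha := a.isLt
    have hb := b.isLt
    set f := eF n k p a.val b.val hp hkn ha hb with hf
    have hmono := eF_strictMono hp hkn ha hb hab
    set X := Finset.image f Finset.univ with hX
    have hXcard : X.card = k := by
      rw [hX, Finset.card_image_of_injective _ hmono.injective, Finset.card_univ,
        Fintype.card_fin]
    obtain ⟨P, hPS, hF⟩ := hS X hXcard
    have horder : ∀ j, ((X.orderIsoOfFin hXcard j : Fin n)) = f j := by
      have huniq := Finset.orderEmbOfFin_unique hXcard
        (fun x => Finset.mem_image_of_mem f (Finset.mem_univ x)) hmono
      intro j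
      rw [Finset.coe_orderIsoOfFin_apply, ← huniq]
    have hfp : f ⟨p, by omega⟩ = ⟨p + a.val, hA a⟩ := Fin.ext (eF_val_p hp hkn ha hb)
    have hfp1 : f ⟨p + 1, hp⟩ = ⟨p + b.val, hA b⟩ := Fin.ext (eF_val_p1 hp hkn ha hb)
    have hfi : f i₀ = c := Fin.ext (eF_val_i hp hkn ha hb i₀ hv1 hv2)
    refine ⟨P, hPS, ?_, ?_⟩
    · have h1 := hF ⟨p, by omega⟩ i₀
      rwa [horder, horder, hfp, hfi] at h1
    · have h2 := hF ⟨p + 1, hp⟩ i₀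
      rwa [horder, horder, hfp1, hfi] at h2
  -- the separating vectors
  set V : Fin (n - k + 2) → (↥S → Bool) :=
    fun a Q => decide ((Q : Equiv.Perm (Fin n)) ⟨p + a.val, hA a⟩ < (Q : Equiv.Perm (Fin n)) c)
    with hV
  have main : ∀ a b : Fin (n - k + 2), a.val < b.val → V a ≠ V b := by
    intro a b h hVab
    obtain ⟨P, hPS, h1, h2⟩ := key a b h
    have hVeq := congrFun hVab ⟨P, hPS⟩
    simp only [hV, decide_eq_decide] at hVeq
    rcases hbet with ⟨hb1, hb2⟩ | ⟨hb1, hb2⟩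
    · have t1 : P ⟨p + a.val, hA a⟩ < P c := h1.mp hb1
      have t2 : ¬ (P ⟨p + b.val, hA b⟩ < P c) := fun hx => absurd (h2.mpr hx) (not_lt.mpr hb2.le)
      exact t2 (hVeq.mp t1)
    · have t1 : ¬ (P ⟨p + a.val, hA a⟩ < P c) := fun hx => absurd (h1.mpr hx) (not_lt.mpr hb2.le)
      have t2 : P ⟨p + b.val, hA b⟩ < P c := h2.mp hb1
      exact t1 (hVeq.mpr t2)
  have hVinj : Function.Injective V := by
    intro a b hab
    by_contra hne
    rcases Nat.lt_trichotomy a.val b.val with h | h | h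
    · exact main a b h hab
    · exact hne (Fin.ext h)
    · exact main b a h hab.symm
  have hcard : n - k + 2 ≤ 2 ^ S.card := by
    have hle := Fintype.card_le_of_injective V hVinj
    simpa [Fintype.card_fun, Fintype.card_coe] using hle
  have hxpos : (0 : ℝ) < (n : ℝ) - k + 2 := by
    have hkr : (k : ℝ) ≤ n := Nat.cast_le.mpr hkn
    linarith
  rw [Real.logb_le_iff_le_rpow (by norm_num) hxpos]
  have hcast : ((n - k + 2 : ℕ) : ℝ) = (n : ℝ) - k + 2 := by
    push_cast [Nat.cast_sub hkn]; ring
  rw [← hcast]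
  calc ((n - k + 2 : ℕ) : ℝ) ≤ ((2 ^ S.card : ℕ) : ℝ) := Nat.cast_le.mpr hcard
    _ = (2 : ℝ) ^ (S.card : ℝ) := by rw [Real.rpow_natCast]; push_cast; ring
end

section
/- Let n ≥ 3, k ≥ 3, and t ≥ 3. Any family S of permutations of [n] such that every k-subset of [n] appears in at least t distinct orders across S satisfies |S| ≥ log₂ log₂(n-1) - log₂ log₂(k-1) + t - 3. -/
attribute [local instance 0] Classical.propDecidable

/-- `P` is increasing on the finset `C`. -/
def IncOn {n : ℕ} (P : Equiv.Perm (Fin n)) (C : Finset (Fin n)) : Prop :=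
  ∀ a ∈ C, ∀ b ∈ C, a < b → P a < P b

/-- `P` is decreasing on the finset `C`. -/
def DecOn {n : ℕ} (P : Equiv.Perm (Fin n)) (C : Finset (Fin n)) : Prop :=
  ∀ a ∈ C, ∀ b ∈ C, a < b → P b < P a

lemma IncOn.mono {n : ℕ} {P : Equiv.Perm (Fin n)} {C D : Finset (Fin n)}
    (h : C ⊆ D) (hD : IncOn P D) : IncOn P C :=
  fun a ha b hb hab => hD a (h ha) b (h hb) hab

lemma DecOn.mono {n : ℕ} {P : Equiv.Perm (Fin n)} {C D : Finset (Fin n)}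
    (h : C ⊆ D) (hD : DecOn P D) : DecOn P C :=
  fun a ha b hb hab => hD a (h ha) b (h hb) hab

lemma decOn_iff_incOn_rev {n : ℕ} (P : Equiv.Perm (Fin n)) (C : Finset (Fin n)) :
    DecOn P C ↔ IncOn (P.trans Fin.revPerm) C := by
  constructor <;> intro h a ha b hb hab
  · simpa [Equiv.trans_apply, Fin.rev_lt_rev] using h a ha b hb hab
  · have := h a ha b hb hab
    simpa [Equiv.trans_apply, Fin.rev_lt_rev] using this

/-- The length of the longest `P`-increasing chain inside `A` ending at `x`. -/
noncomputable def longestInc {n : ℕ} (P : Equiv.Perm (Fin n)) (A : Finset (Fin n))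
    (x : Fin n) : ℕ :=
  ((A.powerset.filter (fun C => x ∈ C ∧ (∀ y ∈ C, y ≤ x) ∧ IncOn P C)).sup Finset.card)

lemma singleton_mem_chains {n : ℕ} (P : Equiv.Perm (Fin n)) (A : Finset (Fin n))
    {x : Fin n} (hx : x ∈ A) :
    {x} ∈ A.powerset.filter (fun C => x ∈ C ∧ (∀ y ∈ C, y ≤ x) ∧ IncOn P C) := by
  refine Finset.mem_filter.2 ⟨Finset.mem_powerset.2 (Finset.singleton_subset_iff.2 hx),
    Finset.mem_singleton_self x, ?_, ?_⟩
  · intro y hy; rw [Finset.mem_singleton] at hy; subst hy; exact le_refl _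
  · intro a ha b hb hab
    rw [Finset.mem_singleton] at ha hb; subst ha; subst hb; exact absurd hab (lt_irrefl _)

lemma one_le_longestInc {n : ℕ} (P : Equiv.Perm (Fin n)) {A : Finset (Fin n)}
    {x : Fin n} (hx : x ∈ A) : 1 ≤ longestInc P A x := by
  have h := Finset.le_sup (f := Finset.card) (singleton_mem_chains P A hx)
  rw [Finset.card_singleton] at h
  exact h

lemma longestInc_le {n : ℕ} {P : Equiv.Perm (Fin n)} {A : Finset (Fin n)} {r : ℕ}
    (hbd : ∀ C ⊆ A, IncOn P C → C.card ≤ r) (x : Fin n) : longestInc P A x ≤ r := by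
  refine Finset.sup_le fun C hC => ?_
  simp only [Finset.mem_filter, Finset.mem_powerset] at hC
  exact hbd C hC.1 hC.2.2.2

lemma longestInc_lt {n : ℕ} (P : Equiv.Perm (Fin n)) (A : Finset (Fin n))
    {x y : Fin n} (hx : x ∈ A) (hy : y ∈ A) (hxy : x < y) (hP : P x < P y) :
    longestInc P A x < longestInc P A y := by
  obtain ⟨C, hCmem, hCsup⟩ := Finset.exists_mem_eq_sup
    (A.powerset.filter (fun C => x ∈ C ∧ (∀ y ∈ C, y ≤ x) ∧ IncOn P C))
    ⟨{x}, singleton_mem_chains P A hx⟩ Finset.card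
  simp only [Finset.mem_filter, Finset.mem_powerset] at hCmem
  obtain ⟨hCA, hxC, hCle, hCinc⟩ := hCmem
  have hyC : y ∉ C := fun h => absurd (hCle y h) (not_le.2 hxy)
  have hkey : insert y C ∈ A.powerset.filter
      (fun C => y ∈ C ∧ (∀ z ∈ C, z ≤ y) ∧ IncOn P C) := by
    simp only [Finset.mem_filter, Finset.mem_powerset]
    refine ⟨Finset.insert_subset hy hCA, Finset.mem_insert_self _ _, ?_, ?_⟩
    · intro z hz
      rcases Finset.mem_insert.1 hz with rfl | hz
      · exact le_refl _
      · exact le_of_lt (lt_of_le_of_lt (hCle z hz) hxy)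
    · intro a ha b hb hab
      rcases Finset.mem_insert.1 ha with ha' | ha'
      · subst ha'
        rcases Finset.mem_insert.1 hb with hb' | hb'
        · subst hb'; exact absurd hab (lt_irrefl _)
        · exact absurd hab (not_lt.2 ((hCle b hb').trans hxy.le))
      · rcases Finset.mem_insert.1 hb with hb' | hb'
        · subst hb'
          rcases eq_or_lt_of_le (hCle a ha') with h' | h'
          · rw [h']; exact hP
          · exact lt_trans (hCinc a ha' x hxC h') hP
        · exact hCinc a ha' b hb' hab
  have hle := Finset.le_sup (f := Finset.card) hkey
  have hins : C.card + 1 ≤ longestInc P A y := by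
    rw [Finset.card_insert_of_notMem hyC] at hle
    exact hle
  have hx' : longestInc P A x = C.card := hCsup
  omega

/-- Finitary Erdős–Szekeres: a set of size `r * s + 1` contains an increasing chain
of size `r + 1` or a decreasing chain of size `s + 1`. -/
lemma erdos_szekeres_finset {n : ℕ} (P : Equiv.Perm (Fin n)) (A : Finset (Fin n))
    (r s : ℕ) (h : r * s + 1 ≤ A.card) :
    (∃ C ⊆ A, r + 1 ≤ C.card ∧ IncOn P C) ∨ (∃ C ⊆ A, s + 1 ≤ C.card ∧ DecOn P C) := by
  by_contra hcon
  push_neg at hcon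
  obtain ⟨h1, h2⟩ := hcon
  have hIncBd : ∀ C ⊆ A, IncOn P C → C.card ≤ r := by
    intro C hC hI
    by_contra hcard
    exact h1 C hC (by omega) hI
  have hDecBd : ∀ C ⊆ A, IncOn (P.trans Fin.revPerm) C → C.card ≤ s := by
    intro C hC hI
    by_contra hcard
    exact h2 C hC (by omega) ((decOn_iff_incOn_rev P C).2 hI)
  set Q := P.trans Fin.revPerm with hQ
  have hinj : ∀ x ∈ A, ∀ y ∈ A,
      (longestInc P A x, longestInc Q A x) = (longestInc P A y, longestInc Q A y) → x = y := by
    intro x hx y hy heq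
    by_contra hne
    have h12 := Prod.ext_iff.1 heq
    rcases lt_trichotomy x y with hlt | hEq | hlt
    · rcases lt_trichotomy (P x) (P y) with hp | hp | hp
      · exact absurd h12.1 (ne_of_lt (longestInc_lt P A hx hy hlt hp))
      · exact hne (P.injective hp)
      · have : Q x < Q y := by simpa [hQ, Equiv.trans_apply, Fin.rev_lt_rev] using hp
        exact absurd h12.2 (ne_of_lt (longestInc_lt Q A hx hy hlt this))
    · exact hne hEq
    · rcases lt_trichotomy (P y) (P x) with hp | hp | hp
      · exact absurd h12.1 (ne_of_gt (longestInc_lt P A hy hx hlt hp))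
      · exact hne (P.injective hp).symm
      · have : Q y < Q x := by simpa [hQ, Equiv.trans_apply, Fin.rev_lt_rev] using hp
        exact absurd h12.2 (ne_of_gt (longestInc_lt Q A hy hx hlt this))
  have hmap : ∀ x ∈ A, (longestInc P A x, longestInc Q A x) ∈
      Finset.Icc 1 r ×ˢ Finset.Icc 1 s := by
    intro x hx
    simp only [Finset.mem_product, Finset.mem_Icc]
    exact ⟨⟨one_le_longestInc P hx, longestInc_le hIncBd x⟩,
      ⟨one_le_longestInc Q hx, longestInc_le hDecBd x⟩⟩
  have hcard := Finset.card_le_card_of_injOn _ hmap (fun x hx y hy => hinj x hx y hy)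
  rw [Finset.card_product, Nat.card_Icc, Nat.card_Icc] at hcard
  simp only [Nat.add_sub_cancel] at hcard
  omega

/-- Iterated Erdős–Szekeres: any large set contains a `k`-set on which every
permutation in the list is monotone. -/
lemma iterated_es {n k : ℕ} (hk : 1 ≤ k) :
    ∀ (l : List (Equiv.Perm (Fin n))) (A : Finset (Fin n)),
      (k - 1) ^ (2 ^ l.length) + 1 ≤ A.card →
      ∃ X ⊆ A, X.card = k ∧ ∀ P ∈ l, IncOn P X ∨ DecOn P X := by
  intro l
  induction l with
  | nil =>
    intro A hA
    simp only [List.length_nil, pow_zero, pow_one] at hA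
    obtain ⟨X, hXA, hXcard⟩ := Finset.exists_subset_card_eq (show k ≤ A.card by omega)
    exact ⟨X, hXA, hXcard, by simp⟩
  | cons P l ih =>
    intro A hA
    set N := (k - 1) ^ (2 ^ l.length) with hN
    have hA' : N * N + 1 ≤ A.card := by
      have : (k - 1) ^ (2 ^ (P :: l).length) = N * N := by
        rw [hN, List.length_cons, pow_succ, pow_mul, sq]
      omega
    rcases erdos_szekeres_finset P A N N hA' with ⟨C, hCA, hCcard, hCmono⟩ | ⟨C, hCA, hCcard, hCmono⟩
    · obtain ⟨X, hXC, hXcard, hXmono⟩ := ih C (by omega)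
      refine ⟨X, hXC.trans hCA, hXcard, ?_⟩
      intro Q hQ
      rcases List.mem_cons.1 hQ with rfl | hQ
      · exact Or.inl (hCmono.mono hXC)
      · exact hXmono Q hQ
    · obtain ⟨X, hXC, hXcard, hXmono⟩ := ih C (by omega)
      refine ⟨X, hXC.trans hCA, hXcard, ?_⟩
      intro Q hQ
      rcases List.mem_cons.1 hQ with rfl | hQ
      · exact Or.inr (hCmono.mono hXC)
      · exact hXmono Q hQ

lemma ordOn_of_incOn {n : ℕ} {P : Equiv.Perm (Fin n)} {X : Finset (Fin n)}
    (h : IncOn P X) : ordOn P X = fun a b : ↥X => (a : Fin n) < b := by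
  funext a b
  apply propext
  constructor
  · intro hab
    have hab' : P a.val < P b.val := hab
    show (a : Fin n) < (b : Fin n)
    by_contra h'
    rcases eq_or_lt_of_le (not_lt.1 h') with h'' | h''
    · rw [h''] at hab'
      exact lt_irrefl _ hab' 
    · exact absurd (h _ b.2 _ a.2 h'') (not_lt.2 hab'.le)
  · exact fun h' => h _ a.2 _ b.2 h'

lemma ordOn_of_decOn {n : ℕ} {P : Equiv.Perm (Fin n)} {X : Finset (Fin n)}
    (h : DecOn P X) : ordOn P X = fun a b : ↥X => (b : Fin n) < a := by
  funext a b
  apply propext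
  constructor
  · intro hab
    have hab' : P a.val < P b.val := hab
    show (b : Fin n) < (a : Fin n)
    by_contra h'
    rcases eq_or_lt_of_le (not_lt.1 h') with h'' | h''
    · rw [h''] at hab'
      exact lt_irrefl _ hab' 
    · exact absurd (h _ a.2 _ b.2 h'') (not_lt.2 hab'.le)
  · exact fun h' => h _ b.2 _ a.2 h'

/-- if every `k`-subset of `[n]` appears in at least `t` distinct orders
across the family `S`, then `|S| ≥ log₂log₂(n-1) - log₂log₂(k-1) + t - 3`. -/
theorem stmt_8 (n k t : ℕ) (hn : 3 ≤ n) (hk : 3 ≤ k) (hkn : k ≤ n) (ht : 3 ≤ t)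
    (S : Finset (Equiv.Perm (Fin n)))
    (hS : ∀ X : Finset (Fin n), X.card = k → t ≤ (realized ↑S X).ncard) :
    Real.logb 2 (Real.logb 2 ((n : ℝ) - 1)) - Real.logb 2 (Real.logb 2 ((k : ℝ) - 1))
      + t - 3 ≤ S.card := by
  classical
  -- First: t ≤ S.card
  have hts : t ≤ S.card := by
    obtain ⟨X, _, hXc⟩ := Finset.exists_subset_card_eq
      (show k ≤ (Finset.univ : Finset (Fin n)).card by simpa using hkn)
    have h1 := hS X hXc
    have h2 : (realized ↑S X).ncard ≤ S.card := by
      have := Set.ncard_image_le (f := fun P => ordOn P X) (s := ↑S) S.finite_toSet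
      simpa [realized, Set.ncard_coe_finset] using this
    omega
  by_contra hcon
  push_neg at hcon
  set m := S.card - t + 3 with hm
  -- Derive (k-1)^(2^m) + 1 ≤ n from the failed inequality
  have hb2 : (2 : ℝ) ≤ (k : ℝ) - 1 := by
    have : (3 : ℝ) ≤ (k : ℝ) := by exact_mod_cast hk
    linarith
  have ha2 : (2 : ℝ) ≤ (n : ℝ) - 1 := by
    have : (3 : ℝ) ≤ (n : ℝ) := by exact_mod_cast hn
    linarith
  have hbpos : (0 : ℝ) < (k : ℝ) - 1 := by linarith
  have hapos : (0 : ℝ) < (n : ℝ) - 1 := by linarith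
  have hlb : 1 ≤ Real.logb 2 ((k : ℝ) - 1) := by
    have h := (Real.logb_le_logb (b := 2) one_lt_two (by norm_num) hbpos).2 hb2
    rwa [Real.logb_self_eq_one one_lt_two] at h
  -- from hcon: logb2 logb2 (n-1) > m + logb2 logb2 (k-1)
  have hmR : (m : ℝ) = (S.card : ℝ) - t + 3 := by
    rw [hm, Nat.cast_add, Nat.cast_sub hts]
    norm_num
  have hstep1 : (m : ℝ) + Real.logb 2 (Real.logb 2 ((k : ℝ) - 1))
      < Real.logb 2 (Real.logb 2 ((n : ℝ) - 1)) := by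
    rw [hmR]; linarith
  have hpow : Real.logb 2 ((2 : ℝ) ^ m * Real.logb 2 ((k : ℝ) - 1))
      = (m : ℝ) + Real.logb 2 (Real.logb 2 ((k : ℝ) - 1)) := by
    rw [Real.logb_mul (by positivity) (by linarith), Real.logb_pow,
      Real.logb_self_eq_one one_lt_two]
    ring
  have hlogn : (0 : ℝ) < Real.logb 2 ((n : ℝ) - 1) := Real.logb_pos one_lt_two (by linarith)
  have hstep2 : (2 : ℝ) ^ m * Real.logb 2 ((k : ℝ) - 1) < Real.logb 2 ((n : ℝ) - 1) := by
    have := hstep1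
    rw [← hpow] at this
    exact (Real.logb_lt_logb_iff one_lt_two (by positivity) hlogn).1 this
  have hstep3 : ((k : ℝ) - 1) ^ (2 ^ m) < (n : ℝ) - 1 := by
    have hlogpow : Real.logb 2 (((k : ℝ) - 1) ^ (2 ^ m : ℕ))
        = ((2 ^ m : ℕ) : ℝ) * Real.logb 2 ((k : ℝ) - 1) := Real.logb_pow 2 _ _
    have h2m : ((2 ^ m : ℕ) : ℝ) = (2 : ℝ) ^ m := by push_cast; ring
    have : Real.logb 2 (((k : ℝ) - 1) ^ (2 ^ m : ℕ)) < Real.logb 2 ((n : ℝ) - 1) := by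
      rw [hlogpow, h2m]; exact hstep2
    exact (Real.logb_lt_logb_iff one_lt_two (by positivity) hapos).1 this
  have hnk : (k - 1) ^ (2 ^ m) + 1 ≤ n := by
    have hcast : (((k - 1) ^ (2 ^ m) : ℕ) : ℝ) < ((n - 1 : ℕ) : ℝ) := by
      push_cast [Nat.cast_sub (by omega : 1 ≤ k), Nat.cast_sub (by omega : 1 ≤ n)]
      exact hstep3
    have := Nat.cast_lt (α := ℝ) |>.1 hcast
    omega
  -- Pick m permutations from S
  obtain ⟨T, hTS, hTcard⟩ := Finset.exists_subset_card_eq (show m ≤ S.card by omega)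
  have hlen : T.toList.length = m := by rw [Finset.length_toList, hTcard]
  obtain ⟨X, _, hXcard, hXmono⟩ := iterated_es (show 1 ≤ k by omega) T.toList
    (Finset.univ : Finset (Fin n)) (by simpa [hlen] using hnk)
  -- Bound the number of realized orders on X
  set Rp : ↥X → ↥X → Prop := fun a b => (a : Fin n) < b with hRp
  set Rm : ↥X → ↥X → Prop := fun a b => (b : Fin n) < a with hRm
  have hsub : realized ↑S X ⊆ ((fun P => ordOn P X) '' ↑(S \ T)) ∪ {Rp, Rm} := by
    rintro R ⟨P, hP, rfl⟩
    by_cases hPT : P ∈ T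
    · right
      rcases hXmono P (Finset.mem_toList.2 hPT) with hmono | hmono
      · exact Or.inl (ordOn_of_incOn hmono)
      · exact Or.inr (ordOn_of_decOn hmono)
    · left
      exact ⟨P, by simpa [Finset.mem_sdiff] using ⟨hP, hPT⟩, rfl⟩
  have hfin1 : (((fun P => ordOn P X) '' ↑(S \ T)) : Set _).Finite :=
    (S \ T).finite_toSet.image _
  have hfin2 : ({Rp, Rm} : Set (↥X → ↥X → Prop)).Finite := (Set.finite_singleton Rm).insert Rp
  have hbound : (realized ↑S X).ncard ≤ (S \ T).card + 2 := by
    calc (realized ↑S X).ncard ≤ (((fun P => ordOn P X) '' ↑(S \ T)) ∪ {Rp, Rm}).ncard :=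
          Set.ncard_le_ncard hsub (hfin1.union hfin2)
      _ ≤ (((fun P => ordOn P X) '' ↑(S \ T))).ncard + ({Rp, Rm} : Set _).ncard :=
          Set.ncard_union_le _ _
      _ ≤ (S \ T).card + 2 := by
          gcongr
          · have h1 := Set.ncard_image_le (f := fun P => ordOn P X) (s := (↑(S \ T) : Set _))
              (S \ T).finite_toSet
            rw [Set.ncard_coe_finset] at h1
            exact h1
          · calc ({Rp, Rm} : Set _).ncard ≤ ({Rm} : Set _).ncard + 1 :=
                  Set.ncard_insert_le _ _
              _ ≤ 2 := by rw [Set.ncard_singleton]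
  have hSdT : (S \ T).card = S.card - m := by
    rw [Finset.card_sdiff_of_subset hTS, hTcard]
  have := hS X hXcard
  omega
end

section
/- Let n ≥ 3 and k ≥ 3 with n ≥ k. Any family S of permutations of [n] such that every k-subset of [n] appears in at least 2(k-1)! + 1 distinct orders across S satisfies |S| ≥ (1/(k-2)) · log₂(n-k+2). In particular, f_k(n, 2(k-1)!+1) = Ω(log n) for fixed k. -/
/-!
Fix a set `W` of `k - 2` points and record, for every point `x ∉ W` and every `P ∈ S`, which
points of `W` lie below `x` in `P`; this takes at most `2 ^ ((k - 2) |S|)` values. If two points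
`x ≠ y` got the same record, then in every `P ∈ S` they would be consecutive on the `k`-set
`X = W ∪ {x, y}`, so `S` would realize at most `2 (k - 1)!` orders on `X`. Hence
`n - k + 2 ≤ 2 ^ ((k - 2) |S|)`.
-/

open Finset Function
open scoped Nat

section Twins

variable {α β γ : Type*} [LinearOrder β] [LinearOrder γ]

/-- For injective `f` this says that `f a` and `f b` are adjacent among the values of `f`. -/
def Twins (f : α → β) (a b : α) : Prop :=
  ∀ c, c ≠ a → c ≠ b → (f c < f a ↔ f c < f b)

variable {f : α → β} {g : α → γ} {a b : α}

lemma Twins.lt_iff (hf : Injective f) (h : Twins f a b) {c : α} (hca : c ≠ a) (hcb : c ≠ b) :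
    f a < f c ↔ f b < f c := by
  rw [← not_le, (hf.ne hca).le_iff_lt, h c hca hcb, ← (hf.ne hcb).le_iff_lt, not_le]

lemma lt_iff_lt_of_twins (hf : Injective f) (hg : Injective g) (hab : a ≠ b)
    (hfab : Twins f a b) (hgab : Twins g a b) (hab' : f a < f b ↔ g a < g b)
    (h : ∀ c d, c ≠ b → d ≠ b → (f c < f d ↔ g c < g d)) (c d : α) :
    f c < f d ↔ g c < g d := by
  have hba : f b < f a ↔ g b < g a := by
    rw [lt_iff_not_ge, (hf.ne hab).le_iff_lt, lt_iff_not_ge (b := g a), (hg.ne hab).le_iff_lt,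
      hab']
  by_cases hcb : c = b <;> by_cases hdb : d = b
  · simp only [hcb, hdb, lt_self_iff_false]
  · rw [hcb]
    rcases eq_or_ne d a with rfl | hda
    · exact hba
    · rw [← hfab.lt_iff hf hda hdb, ← hgab.lt_iff hg hda hdb]
      exact h a d hab hdb
  · rw [hdb]
    rcases eq_or_ne c a with rfl | hca
    · exact hab'
    · rw [← hfab c hca hcb, ← hgab c hca hcb]
      exact h c a hcb hab
  · exact h c d hcb hdb

end Twins

lemma exists_equiv_fin_lt_iff {α β : Type*} [Fintype α] [LinearOrder β] {g : α → β}
    (hg : Injective g) : ∃ e : α ≃ Fin (Fintype.card α), ∀ c d, e c < e d ↔ g c < g d := by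
  let : LinearOrder α := LinearOrder.lift' g hg
  exact ⟨(Fintype.orderIsoFinOfCardEq α rfl).symm.toEquiv,
    fun c d => (Fintype.orderIsoFinOfCardEq α rfl).symm.lt_iff_lt⟩

section Realized

variable {n : ℕ} (S : Set (Equiv.Perm (Fin n)))

lemma ncard_realized_le_factorial (X : Finset (Fin n)) : (realized S X).ncard ≤ X.card ! := by
  have hsub : realized S X ⊆
      (fun e : ↥X ≃ Fin (Fintype.card ↥X) => fun c d => e c < e d) '' Set.univ := by
    rintro _ ⟨P, -, rfl⟩
    obtain ⟨e, he⟩ := exists_equiv_fin_lt_iff (g := fun c : ↥X => P c)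
      fun c d h => Subtype.ext (P.injective h)
    exact ⟨e, trivial, funext₂ fun c d => propext (he c d)⟩
  calc (realized S X).ncard ≤ (Set.univ : Set (↥X ≃ Fin (Fintype.card ↥X))).ncard :=
        (Set.ncard_le_ncard hsub (Set.toFinite _)).trans (Set.ncard_image_le (Set.toFinite _))
    _ = X.card ! := by
        rw [Set.ncard_univ, Nat.card_eq_fintype_card, Fintype.card_equiv (Fintype.equivFin _),
          Fintype.card_coe]

lemma ncard_realized_le_of_twins {X : Finset (Fin n)} {a b : Fin n} (ha : a ∈ X) (hb : b ∈ X)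
    (hab : a ≠ b) (htwins : ∀ P ∈ S, ∀ c ∈ X, c ≠ a → c ≠ b → (P c < P a ↔ P c < P b)) :
    (realized S X).ncard ≤ 2 * (X.card - 1)! := by
  set Y := X.erase b
  let ι : ↥Y → ↥X := fun c => ⟨c, mem_of_mem_erase c.2⟩
  -- an order in which `a`, `b` are twins is determined by how it compares them and by its
  -- restriction to `Y`
  let Φ : (↥X → ↥X → Prop) → Prop × (↥Y → ↥Y → Prop) :=
    fun R => (R ⟨a, ha⟩ ⟨b, hb⟩, fun c d => R (ι c) (ι d))
  have hmaps : ∀ R ∈ realized S X, Φ R ∈ (Set.univ ×ˢ realized S Y) := by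
    rintro _ ⟨P, hP, rfl⟩
    exact ⟨trivial, P, hP, rfl⟩
  have hinj : Set.InjOn Φ (realized S X) := by
    rintro _ ⟨P, hP, rfl⟩ _ ⟨Q, hQ, rfl⟩ hPQ
    have twins : ∀ R ∈ S, Twins (fun c : ↥X => R c) ⟨a, ha⟩ ⟨b, hb⟩ := fun R hR c hca hcb =>
      htwins R hR c c.2 (Subtype.coe_ne_coe.2 hca) (Subtype.coe_ne_coe.2 hcb)
    have hRinj : ∀ R : Equiv.Perm (Fin n), Injective fun c : ↥X => R c :=
      fun R c d h => Subtype.ext (R.injective h)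
    funext c d
    refine propext (lt_iff_lt_of_twins (hRinj P) (hRinj Q) (Subtype.coe_ne_coe.1 hab)
      (twins P hP) (twins Q hQ) (Iff.of_eq (congrArg Prod.fst hPQ)) (fun c d hc hd => ?_) c d)
    exact Iff.of_eq (congrFun₂ (congrArg Prod.snd hPQ)
      ⟨c, mem_erase.2 ⟨Subtype.coe_ne_coe.2 hc, c.2⟩⟩
      ⟨d, mem_erase.2 ⟨Subtype.coe_ne_coe.2 hd, d.2⟩⟩)
  calc (realized S X).ncard ≤ (Set.univ ×ˢ realized S Y).ncard :=
        Set.ncard_le_ncard_of_injOn Φ hmaps hinj (Set.toFinite _)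
    _ = 2 * (realized S Y).ncard := by
        rw [Set.ncard_prod, Set.ncard_univ, Nat.card_eq_fintype_card, Fintype.card_prop]
    _ ≤ 2 * Y.card ! := Nat.mul_le_mul_left 2 (ncard_realized_le_factorial S Y)
    _ = 2 * (X.card - 1)! := by rw [card_erase_of_mem hb]

end Realized

lemma card_sub_le_two_pow {n k : ℕ} (hk : 2 ≤ k) (hkn : k ≤ n)
    (S : Finset (Equiv.Perm (Fin n)))
    (hS : ∀ X : Finset (Fin n), X.card = k → 2 * (k - 1)! < (realized ↑S X).ncard) :
    n - (k - 2) ≤ 2 ^ ((k - 2) * S.card) := by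
  obtain ⟨W, -, hW⟩ := exists_subset_card_eq (s := (univ : Finset (Fin n))) (n := k - 2)
    (by rw [card_univ, Fintype.card_fin]; omega)
  let E : Fin n → ↥W × ↥S → Prop := fun x p => p.2.1 p.1 < p.2.1 x
  have hinj : Set.InjOn E ↑Wᶜ := by
    intro x hx y hy hxy
    by_contra hne
    simp only [coe_compl, Set.mem_compl_iff, mem_coe] at hx hy
    have hX : (insert x (insert y W)).card = k := by
      rw [card_insert_of_notMem (by simp [hne, hx]), card_insert_of_notMem hy, hW]
      omega
    refine (hS _ hX).not_ge ((ncard_realized_le_of_twins ↑S (mem_insert_self x _)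
      (mem_insert_of_mem (mem_insert_self y W)) hne ?_).trans_eq (by rw [hX]))
    intro P hP c hc hcx hcy
    have hcW : c ∈ W := by simpa [hcx, hcy] using hc
    exact Iff.of_eq (congrFun hxy (⟨c, hcW⟩, ⟨P, hP⟩))
  calc n - (k - 2) = (Wᶜ).card := by rw [card_compl, Fintype.card_fin, hW]
    _ ≤ (univ : Finset (↥W × ↥S → Prop)).card :=
        card_le_card_of_injOn E (fun _ _ => mem_coe.2 (mem_univ _)) hinj
    _ = 2 ^ ((k - 2) * S.card) := by
        rw [card_univ, Fintype.card_fun, Fintype.card_prop, Fintype.card_prod, Fintype.card_coe,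
          Fintype.card_coe, hW]

lemma one_div_mul_logb_le_of_le_two_pow {x : ℝ} {m s : ℕ} (hx : 0 < x) (hm : 0 < m)
    (h : x ≤ 2 ^ (m * s)) : 1 / (m : ℝ) * Real.logb 2 x ≤ s := by
  have hlog : Real.logb 2 x ≤ m * s :=
    calc Real.logb 2 x ≤ Real.logb 2 (2 ^ (m * s)) := Real.logb_le_logb_of_le one_lt_two hx h
      _ = m * s := by rw [Real.logb_pow, Real.logb_self_eq_one one_lt_two]; push_cast; ring
  rw [one_div_mul_eq_div, div_le_iff₀ (by positivity)]
  linarith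

theorem stmt_9_general (n k : ℕ) (hk : 3 ≤ k) (hkn : k ≤ n)
    (S : Finset (Equiv.Perm (Fin n)))
    (hS : ∀ X : Finset (Fin n), X.card = k →
      2 * Nat.factorial (k - 1) + 1 ≤ (realized ↑S X).ncard) :
    (1 / ((k : ℝ) - 2)) * Real.logb 2 ((n : ℝ) - k + 2) ≤ S.card := by
  have hcount := card_sub_le_two_pow (by omega) hkn S hS
  have hk2 : ((k - 2 : ℕ) : ℝ) = k - 2 := by rw [Nat.cast_sub (by omega)]; norm_num
  have hnk : ((n - (k - 2) : ℕ) : ℝ) = n - k + 2 := by rw [Nat.cast_sub (by omega), hk2]; ring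
  rw [← hk2, ← hnk]
  exact one_div_mul_logb_le_of_le_two_pow (by rw [hnk]; linarith [(Nat.cast_le (α := ℝ)).2 hkn])
    (by omega) (by exact_mod_cast hcount)

/-- if every `k`-subset of `[n]` appears in at least `2·(k-1)! + 1`
distinct orders across the family `S`, then `|S| ≥ (1/(k-2)) · log₂(n-k+2)`. -/
theorem stmt_9 (n k : ℕ) (hn : 3 ≤ n) (hk : 3 ≤ k) (hkn : k ≤ n)
    (S : Finset (Equiv.Perm (Fin n)))
    (hS : ∀ X : Finset (Fin n), X.card = k →
      2 * Nat.factorial (k - 1) + 1 ≤ (realized ↑S X).ncard) :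
    (1 / ((k : ℝ) - 2)) * Real.logb 2 ((n : ℝ) - k + 2) ≤ S.card :=
  stmt_9_general n k hk hkn S hS
end

section
/- For fixed k ≥ 1 and m ≥ 1, the quantity F_k(n,m) is weakly decreasing in n for n ≥ k: F_k(n,m) ≥ F_k(n+1,m). -/
/-- A family `S` totally shatters a subset `X` if all `|X|!` relative orders of the
elements of `X` occur among the permutations of `S`. -/
def TotallyShatters {n : ℕ} (S : Set (Equiv.Perm (Fin n))) (X : Finset (Fin n)) : Prop :=
  (realized S X).ncard = Nat.factorial X.card

/-- `F k n m`: the maximum, over collections of `m` permutations of `[n]`, of the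
fraction of `k`-subsets of `[n]` that are totally shattered. -/
noncomputable def F (k n m : ℕ) : ℝ :=
  sSup {α : ℝ | ∃ S : Fin m → Equiv.Perm (Fin n),
    α = ({X : Finset (Fin n) | X.card = k ∧ TotallyShatters (Set.range S) X}.ncard : ℝ) /
      (n.choose k)}


/-! Deleting a point `i` from every permutation of a family on `[n + 1]`, keeping the relative
order of the other points, gives a family on `[n]` that totally shatters the trace of every
shattered `k`-set avoiding `i`. A `k`-set avoids `n + 1 - k` points, so averaging over `i`, some
deletion keeps at least a fraction `(n + 1 - k) / (n + 1)` of the shattered `k`-sets; since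
`C(n, k) (n + 1) = C(n + 1, k) (n + 1 - k)`, this is exactly the inequality of the ratios. -/

open Equiv Finset

namespace Equiv.Perm

variable {n : ℕ}

def deleteAt (i : Fin (n + 1)) (P : Perm (Fin (n + 1))) : Perm (Fin n) :=
  (finSuccAboveEquiv i).trans
    ((P.subtypeEquiv (q := (· ≠ P i)) fun _ => P.injective.ne_iff.symm).trans
      (finSuccAboveEquiv (P i)).symm)

lemma succAbove_deleteAt (i : Fin (n + 1)) (P : Perm (Fin (n + 1))) (a : Fin n) :
    (P i).succAbove (P.deleteAt i a) = P (i.succAbove a) :=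
  congrArg Subtype.val ((finSuccAboveEquiv (P i)).apply_symm_apply _)

lemma deleteAt_lt_deleteAt_iff (i : Fin (n + 1)) (P : Perm (Fin (n + 1))) (a b : Fin n) :
    P.deleteAt i a < P.deleteAt i b ↔ P (i.succAbove a) < P (i.succAbove b) := by
  rw [← succAbove_deleteAt, ← succAbove_deleteAt, Fin.succAbove_lt_succAbove_iff]

end Equiv.Perm

lemma Finset.sum_card_filter_notMem {α : Type*} [Fintype α] [DecidableEq α] {k : ℕ}
    (𝒜 : Finset (Finset α)) (h𝒜 : ∀ X ∈ 𝒜, #X = k) :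
    ∑ a, #{X ∈ 𝒜 | a ∉ X} = (Fintype.card α - k) * #𝒜 := by
  have := sum_card_bipartiteAbove_eq_sum_card_bipartiteBelow (s := univ) (t := 𝒜)
    (r := fun a X => a ∉ X)
  simp only [bipartiteAbove, bipartiteBelow] at this
  rw [this, sum_congr rfl fun X hX => ?_, sum_const, smul_eq_mul, mul_comm]
  rw [← h𝒜 X hX, ← card_compl]
  congr 1
  ext; simp

section Transfer

variable {n n' : ℕ} (f : Fin n ↪ Fin n') (φ : Perm (Fin n') → Perm (Fin n))

lemma ncard_realized_image (hφ : ∀ P a b, φ P a < φ P b ↔ P (f a) < P (f b))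
    (S : Set (Perm (Fin n'))) (Y : Finset (Fin n)) :
    (realized (φ '' S) Y).ncard = (realized S (Y.map f)).ncard := by
  let ε : Y → Y.map f := fun a => ⟨f a, mem_map_of_mem f a.2⟩
  have hε : Function.Surjective ε := by
    rintro ⟨x, hx⟩
    obtain ⟨a, ha, rfl⟩ := mem_map.mp hx
    exact ⟨⟨a, ha⟩, rfl⟩
  let pull : (Y.map f → Y.map f → Prop) → (Y → Y → Prop) := fun R a b => R (ε a) (ε b)
  have hpull : Function.Injective pull := fun R R' h => by
    funext x y
    obtain ⟨a, rfl⟩ := hε x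
    obtain ⟨b, rfl⟩ := hε y
    exact congrFun (congrFun h a) b
  have hrealized : realized (φ '' S) Y = pull '' realized S (Y.map f) := by
    simp only [realized, Set.image_image]
    refine Set.image_congr fun P _ => ?_
    funext a b
    exact propext (hφ P a b)
  rw [hrealized, Set.ncard_image_of_injective _ hpull]

lemma totallyShatters_image_iff (hφ : ∀ P a b, φ P a < φ P b ↔ P (f a) < P (f b))
    (S : Set (Perm (Fin n'))) (Y : Finset (Fin n)) :
    TotallyShatters (φ '' S) Y ↔ TotallyShatters S (Y.map f) := by
  rw [TotallyShatters, TotallyShatters, ncard_realized_image f φ hφ, card_map]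

end Transfer

lemma Finset.exists_map_succAboveEmb_eq {n : ℕ} {i : Fin (n + 1)} {X : Finset (Fin (n + 1))}
    (hi : i ∉ X) : ∃ Y : Finset (Fin n), Y.map (Fin.succAboveEmb i) = X := by
  have hX : X ⊆ univ.map (Fin.succAboveEmb i) := fun x hx => by
    obtain ⟨a, rfl⟩ := Fin.exists_succAbove_eq (ne_of_mem_of_not_mem hx hi)
    exact mem_map_of_mem _ (mem_univ a)
  obtain ⟨Y, -, hY⟩ := subset_map_iff.mp hX
  exact ⟨Y, hY.symm⟩

section Counting

variable {k n : ℕ}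

open Classical in
noncomputable def shatteredSets (k : ℕ) (S : Set (Perm (Fin n))) : Finset (Finset (Fin n)) :=
  {X | #X = k ∧ TotallyShatters S X}

lemma mem_shatteredSets {S : Set (Perm (Fin n))} {X : Finset (Fin n)} :
    X ∈ shatteredSets k S ↔ #X = k ∧ TotallyShatters S X := by
  simp [shatteredSets]

lemma card_filter_notMem_shatteredSets_le (S : Set (Perm (Fin (n + 1)))) (i : Fin (n + 1)) :
    #{X ∈ shatteredSets k S | i ∉ X} ≤ #(shatteredSets k (Perm.deleteAt i '' S)) := by
  rw [← card_map (mapEmbedding (Fin.succAboveEmb i)).toEmbedding]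
  refine card_le_card fun X hX => ?_
  obtain ⟨hXS, hi⟩ := mem_filter.mp hX
  obtain ⟨hcard, hshatters⟩ := mem_shatteredSets.mp hXS
  obtain ⟨Y, rfl⟩ := exists_map_succAboveEmb_eq hi
  refine mem_map_of_mem _ (mem_shatteredSets.mpr ⟨by rwa [card_map] at hcard, ?_⟩)
  exact (totallyShatters_image_iff _ _ (Perm.deleteAt_lt_deleteAt_iff i) S Y).mpr hshatters

lemma exists_card_shatteredSets_le (S : Set (Perm (Fin (n + 1)))) :
    ∃ i : Fin (n + 1), (n + 1 - k) * #(shatteredSets k S)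
      ≤ (n + 1) * #(shatteredSets k (Perm.deleteAt i '' S)) := by
  obtain ⟨i, -, hi⟩ := exists_le_of_sum_le univ_nonempty <| calc
    ∑ _i : Fin (n + 1), (n + 1 - k) * #(shatteredSets k S)
        = (n + 1) * ∑ i, #{X ∈ shatteredSets k S | i ∉ X} := by
      rw [sum_card_filter_notMem _ fun X hX => (mem_shatteredSets.mp hX).1]
      simp
    _ ≤ (n + 1) * ∑ i, #(shatteredSets k (Perm.deleteAt i '' S)) := by
      gcongr with i
      exact card_filter_notMem_shatteredSets_le S i
    _ = ∑ i, (n + 1) * #(shatteredSets k (Perm.deleteAt i '' S)) := mul_sum _ _ _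
  exact ⟨i, hi⟩

noncomputable def shatteredFraction (k : ℕ) (S : Set (Perm (Fin n))) : ℝ :=
  #(shatteredSets k S) / n.choose k

lemma exists_shatteredFraction_le (hkn : k ≤ n) (S : Set (Perm (Fin (n + 1)))) :
    ∃ i : Fin (n + 1), shatteredFraction k S ≤ shatteredFraction k (Perm.deleteAt i '' S) := by
  obtain ⟨i, hi⟩ := exists_card_shatteredSets_le (k := k) S
  refine ⟨i, ?_⟩
  set N := #(shatteredSets k S)
  set N' := #(shatteredSets k (Perm.deleteAt i '' S))
  have key : N * n.choose k * (n + 1) ≤ N' * (n + 1).choose k * (n + 1) := calc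
    N * n.choose k * (n + 1) = (n + 1).choose k * ((n + 1 - k) * N) := by
      rw [mul_assoc, Nat.choose_mul_succ_eq]; ring
    _ ≤ (n + 1).choose k * ((n + 1) * N') := by gcongr
    _ = N' * (n + 1).choose k * (n + 1) := by ring
  rw [shatteredFraction, shatteredFraction,
    div_le_div_iff₀ (by exact_mod_cast Nat.choose_pos (hkn.trans n.le_succ))
      (by exact_mod_cast Nat.choose_pos hkn)]
  exact_mod_cast Nat.le_of_mul_le_mul_right key n.succ_pos

end Counting

lemma F_eq_sSup_shatteredFraction (k n m : ℕ) :
    F k n m =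
      sSup (Set.range fun T : Fin m → Perm (Fin n) => shatteredFraction k (Set.range T)) := by
  classical
  simp only [F, shatteredFraction, shatteredSets, Set.ncard_eq_toFinset_card', Set.toFinset_ofPred]
  congr 1
  ext α
  exact ⟨fun ⟨T, h⟩ => ⟨T, h.symm⟩, fun ⟨T, h⟩ => ⟨T, h.symm⟩⟩

theorem stmt_11_general (k m n : ℕ) (hn : k ≤ n) :
    F k (n + 1) m ≤ F k n m := by
  rw [F_eq_sSup_shatteredFraction, F_eq_sSup_shatteredFraction]
  refine csSup_le (Set.range_nonempty _) ?_
  rintro _ ⟨T, rfl⟩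
  obtain ⟨i, hi⟩ := exists_shatteredFraction_le hn (Set.range T)
  refine hi.trans (le_csSup (Set.finite_range _).bddAbove ⟨Perm.deleteAt i ∘ T, ?_⟩)
  exact congrArg _ (Set.range_comp _ _)

/-- for fixed `k ≥ 1` and `m ≥ 1`, `F_k(n,m)` is weakly decreasing
in `n` for `n ≥ k`. -/
theorem stmt_11 (k m n : ℕ) (hk : 1 ≤ k) (hm : 1 ≤ m) (hn : k ≤ n) :
    F k (n + 1) m ≤ F k n m :=
  stmt_11_general k m n hn
end

section
/- Let k ≥ 2 and let A be a set of k points in the lattice [n]^k ⊆ ℤ^k. Then there exists a coordinate direction j ∈ [k] such that the projection of A omitting coordinate j is injective on A (i.e., no two distinct points of A agree in all coordinates except possibly the j-th). -/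
lemma stmt_16_aux (k n : ℕ) : ∀ (m : ℕ) (S : Finset (Fin k)) (A : Finset (Fin k → Fin n)),
    S.card = m → S.Nonempty →
    (∀ j ∈ S, ∃ a ∈ A, ∃ b ∈ A, a ≠ b ∧ ∀ i, i ≠ j → a i = b i) →
    S.card < A.card := by
  intro m
  induction m with
  | zero =>
    intro S A hS hne _
    exact absurd (Finset.card_eq_zero.mp hS) hne.ne_empty
  | succ m ih =>
    intro S A hS hne hbad
    obtain ⟨j, hj⟩ := hne
    obtain ⟨a, ha, b, hb, hab, hagree⟩ := hbad j hj
    -- collapsing map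
    set r : (Fin k → Fin n) → (Fin k → Fin n) := fun x => Function.update x j (a j) with hr
    have hra : r a = a := Function.update_eq_self j a
    have hrb : r b = a := by
      funext i
      by_cases hi : i = j
      · subst hi; simp [hr]
      · simp [hr, Function.update_of_ne hi, hagree i hi]
    set A' : Finset (Fin k → Fin n) := (A.erase b).image r with hA'
    have hmem : ∀ x ∈ A, r x ∈ A' := by
      intro x hx
      by_cases hxb : x = b
      · subst hxb
        rw [hrb, ← hra]
        exact Finset.mem_image_of_mem r (Finset.mem_erase.mpr ⟨hab, ha⟩)
      · exact Finset.mem_image_of_mem r (Finset.mem_erase.mpr ⟨hxb, hx⟩)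
    have hA'le : A'.card ≤ A.card - 1 := by
      calc A'.card ≤ (A.erase b).card := Finset.card_image_le
        _ = A.card - 1 := Finset.card_erase_of_mem hb
    have hApos : 0 < A.card := Finset.card_pos.mpr ⟨a, ha⟩
    by_cases hm : m = 0
    · -- S = {j}, show 1 < |A|
      have : S.card = 1 := by omega
      rw [this]
      exact Finset.one_lt_card.mpr ⟨a, ha, b, hb, hab⟩
    · have hSe : (S.erase j).card = m := by
        rw [Finset.card_erase_of_mem hj, hS]; omega
      have hSene : (S.erase j).Nonempty := by
        rw [← Finset.card_pos, hSe]; omega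
      have hbad' : ∀ j' ∈ S.erase j, ∃ a' ∈ A', ∃ b' ∈ A', a' ≠ b' ∧
          ∀ i, i ≠ j' → a' i = b' i := by
        intro j' hj'
        obtain ⟨hj'ne, hj'S⟩ := Finset.mem_erase.mp hj'
        obtain ⟨a', ha', b', hb', hab', hagree'⟩ := hbad j' hj'S
        refine ⟨r a', hmem a' ha', r b', hmem b' hb', ?_, ?_⟩
        · intro hEq
          have hne' : a' j' ≠ b' j' := by
            intro h
            apply hab'
            funext i
            by_cases hi : i = j'
            · subst hi; exact h
            · exact hagree' i hi
          apply hne'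
          have := congrFun hEq j'
          simpa [hr, Function.update_of_ne hj'ne] using this
        · intro i hi
          by_cases hij : i = j
          · subst hij; simp [hr]
          · simp [hr, Function.update_of_ne hij, hagree' i hi]
      have := ih (S.erase j) A' hSe hSene hbad'
      rw [hSe] at this
      omega

/-- for any set `A` of `k` points in the lattice `[n]^k` (`k ≥ 2`),
there is a coordinate direction `j` such that the projection omitting coordinate `j`
is injective on `A`. -/
theorem stmt_16 (n k : ℕ) (hk : 2 ≤ k) (A : Finset (Fin k → Fin n)) (hA : A.card = k) :
    ∃ j : Fin k, ∀ a ∈ A, ∀ b ∈ A, (∀ i : Fin k, i ≠ j → a i = b i) → a = b := by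
  by_contra h
  push_neg at h
  have hbad : ∀ j ∈ (Finset.univ : Finset (Fin k)), ∃ a ∈ A, ∃ b ∈ A, a ≠ b ∧
      ∀ i, i ≠ j → a i = b i := by
    intro j _
    obtain ⟨a, ha, b, hb, hag, hne⟩ := h j
    exact ⟨a, ha, b, hb, hne, hag⟩
  have := stmt_16_aux k n (Finset.univ : Finset (Fin k)).card Finset.univ A rfl
    (Finset.univ_nonempty_iff.mpr ⟨⟨0, by omega⟩⟩) hbad
  simp [Finset.card_univ, hA] at this
end

section
/- Suppose there exists a family of S permutations of [n^{k-1}] that totally shatters every k-subset of [n^{k-1}]. Then there exists a family of k·S permutations of [n^k] that totally shatters every k-subset of [n^k]. -/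
namespace Stmt17Aux

/-- Counting lemma: if for every direction `j ∈ J` there is a pair of points of `X`
differing only in coordinate `j`, then `|J| ≤ |X| - 1`. -/
lemma diff_lemma {r : ℕ} {α : Type*} (z : α) (J : Finset (Fin r)) :
    ∀ X : Finset (Fin r → α),
      (∀ j ∈ J, ∃ x ∈ X, ∃ y ∈ X, x ≠ y ∧ ∀ i, i ≠ j → x i = y i) →
      J.card ≤ X.card - 1 := by
  classical
  induction J using Finset.induction_on with
  | empty => intro X _; simp
  | @insert j J hjJ ih =>
    intro X hX
    obtain ⟨x, hx, y, hy, hxy, hagree⟩ := hX j (Finset.mem_insert_self _ _)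
    set q : (Fin r → α) → (Fin r → α) := fun v => Function.update v j z with hq
    have h1 : ∀ j' ∈ J, ∃ x' ∈ X.image q, ∃ y' ∈ X.image q,
        x' ≠ y' ∧ ∀ i, i ≠ j' → x' i = y' i := by
      intro j' hj'
      obtain ⟨x', hx', y', hy', hne, hag⟩ := hX j' (Finset.mem_insert_of_mem hj')
      have hjj' : j ≠ j' := by rintro rfl; exact hjJ hj'
      refine ⟨q x', Finset.mem_image_of_mem _ hx', q y', Finset.mem_image_of_mem _ hy', ?_, ?_⟩
      · intro heq
        apply hne; funext i
        by_cases hij : i = j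
        · rw [hij]; exact hag j hjj'
        · have := congrFun heq i
          simpa [q, Function.update_of_ne hij] using this
      · intro i hij'
        by_cases hij : i = j
        · subst hij; simp [q]
        · simp [q, Function.update_of_ne hij, hag i hij']
    have h2 := ih (X.image q) h1
    have hqxy : q x = q y := by
      funext i
      by_cases hij : i = j
      · subst hij; simp [q]
      · simp [q, Function.update_of_ne hij, hagree i hij]
    have h3 : X.image q ⊆ (X.erase y).image q := by
      intro w hw
      obtain ⟨v, hv, rfl⟩ := Finset.mem_image.1 hw
      by_cases hvy : v = y
      · subst hvy
        exact Finset.mem_image.2 ⟨x, Finset.mem_erase.2 ⟨hxy, hx⟩, hqxy⟩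
      · exact Finset.mem_image.2 ⟨v, Finset.mem_erase.2 ⟨hvy, hv⟩, rfl⟩
    have h4 : (X.image q).card ≤ X.card - 1 := by
      calc (X.image q).card ≤ ((X.erase y).image q).card := Finset.card_le_card h3
        _ ≤ (X.erase y).card := Finset.card_image_le
        _ = X.card - 1 := Finset.card_erase_of_mem hy
    have h5 : 1 ≤ (X.image q).card :=
      Finset.card_pos.2 ⟨q x, Finset.mem_image_of_mem _ hx⟩
    rw [Finset.card_insert_of_notMem hjJ]
    omega

variable (n m : ℕ)

/-- Projection deleting coordinate `j`. -/
def rho (j : Fin (m + 1)) (x : Fin (n ^ (m + 1))) : Fin (n ^ m) :=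
  finFunctionFinEquiv (Fin.removeNth j (finFunctionFinEquiv.symm x))

/-- The splitting equivalence whose first component is `rho j`. -/
def Ej (j : Fin (m + 1)) : Fin (n ^ (m + 1)) ≃ Fin (n ^ m) × Fin n :=
  finFunctionFinEquiv.symm.trans <|
    (Fin.insertNthEquiv (fun _ => Fin n) j).symm.trans <|
      (Equiv.prodComm _ _).trans <|
        Equiv.prodCongr finFunctionFinEquiv (Equiv.refl _)

lemma Ej_fst (j : Fin (m + 1)) (x : Fin (n ^ (m + 1))) :
    (Ej n m j x).1 = rho n m j x := rfl

/-- The permutation of `Fin (n^(m+1))` induced by direction `j` and base permutation `P`. -/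
def QP (j : Fin (m + 1)) (P : Equiv.Perm (Fin (n ^ m))) : Equiv.Perm (Fin (n ^ (m + 1))) :=
  (Ej n m j).trans <|
    (P.prodCongr (Equiv.refl (Fin n))).trans <|
      finProdFinEquiv.trans (finCongr (pow_succ n m).symm)

lemma QP_val (j : Fin (m + 1)) (P : Equiv.Perm (Fin (n ^ m))) (x : Fin (n ^ (m + 1))) :
    (QP n m j P x : ℕ) = ((Ej n m j x).2 : ℕ) + n * (P (rho n m j x) : ℕ) := rfl

lemma lex_step {n a b u v : ℕ} (ha : a < n) (huv : u < v) : a + n * u < b + n * v := by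
  calc a + n * u < n + n * u := by omega
    _ = n * (u + 1) := by ring
    _ ≤ n * v := Nat.mul_le_mul_left _ huv
    _ ≤ b + n * v := by omega

lemma QP_lt_iff (j : Fin (m + 1)) (P : Equiv.Perm (Fin (n ^ m)))
    {x y : Fin (n ^ (m + 1))} (hne : rho n m j x ≠ rho n m j y) :
    QP n m j P x < QP n m j P y ↔ P (rho n m j x) < P (rho n m j y) := by
  have hPne : P (rho n m j x) ≠ P (rho n m j y) := fun h => hne (P.injective h)
  rw [Fin.lt_def, Fin.lt_def, QP_val, QP_val]
  constructor
  · intro h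
    rcases lt_or_ge ((P (rho n m j x)) : ℕ) ((P (rho n m j y)) : ℕ) with h' | h'
    · exact h'
    · exfalso
      have h'' : ((P (rho n m j y)) : ℕ) < ((P (rho n m j x)) : ℕ) := by
        rcases Nat.lt_or_ge ((P (rho n m j y)) : ℕ) ((P (rho n m j x)) : ℕ) with h2 | h2
        · exact h2
        · exact absurd (Fin.val_injective (le_antisymm h2 h')) hPne
      have := lex_step (a := ((Ej n m j y).2 : ℕ)) (b := ((Ej n m j x).2 : ℕ))
        (Ej n m j y).2.isLt h''
      omega
  · intro h
    exact lex_step (Ej n m j x).2.isLt h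

/-- The geometric lemma: any `m+1` points in the grid admit an injective projection. -/
lemma exists_dir (hn : 0 < n) (X : Finset (Fin (n ^ (m + 1)))) (hX : X.card = m + 1) :
    ∃ j, Set.InjOn (rho n m j) ↑X := by
  classical
  by_contra hcon
  push_neg at hcon
  set v : Fin (n ^ (m + 1)) → (Fin (m + 1) → Fin n) := fun x => finFunctionFinEquiv.symm x
    with hv
  have hvinj : Function.Injective v := finFunctionFinEquiv.symm.injective
  have key := diff_lemma (⟨0, hn⟩ : Fin n) (Finset.univ : Finset (Fin (m + 1))) (X.image v) ?_
  · have hcard : (X.image v).card = m + 1 := by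
      rw [Finset.card_image_of_injective _ hvinj, hX]
    rw [hcard, Finset.card_univ, Fintype.card_fin] at key
    omega
  · intro j _
    have hninj := hcon j
    rw [Set.InjOn] at hninj
    push_neg at hninj
    obtain ⟨x, hx, y, hy, hrho, hxy⟩ := hninj
    rw [Finset.mem_coe] at hx hy
    refine ⟨v x, Finset.mem_image_of_mem _ hx, v y, Finset.mem_image_of_mem _ hy, ?_, ?_⟩
    · exact fun h => hxy (hvinj h)
    · intro i hij
      have h1 : Fin.removeNth j (v x) = Fin.removeNth j (v y) :=
        finFunctionFinEquiv.injective hrho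
      obtain ⟨t, ht⟩ := Fin.exists_succAbove_eq hij
      have h2 := congrFun h1 t
      simpa [Fin.removeNth, ht] using h2

/-- Upper bound: at most `κ!` patterns can be realized on a set of size `κ`. -/
lemma upper {N κ : ℕ} (S : Set (Equiv.Perm (Fin N))) (X : Finset (Fin N)) (hX : X.card = κ) :
    (realized S X).ncard ≤ Nat.factorial κ := by
  classical
  have hc : Fintype.card ↥X = κ := by rw [Fintype.card_coe, hX]
  set F : (↥X → ↥X → Prop) → (↥X ≃ Fin κ) := fun p =>
    if h : ∃ e : ↥X ≃ Fin κ, ∀ a b, p a b ↔ e a < e b then h.choose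
    else Fintype.equivFinOfCardEq hc with hF
  have spec : ∀ p ∈ realized S X, ∀ a b, p a b ↔ F p a < F p b := by
    rintro p ⟨P, _, rfl⟩
    have hex : ∃ e : ↥X ≃ Fin κ, ∀ a b, ordOn P X a b ↔ e a < e b := by
      have hBcard : (X.image fun x => P x).card = κ := by
        rw [Finset.card_image_of_injective _ P.injective, hX]
      set iso := Finset.orderIsoOfFin _ hBcard
      have hg : Function.Bijective
          (fun a : ↥X => (⟨P a.val, Finset.mem_image_of_mem _ a.2⟩ :
            ↥(X.image fun x => P x))) := by
        rw [Fintype.bijective_iff_injective_and_card]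
        refine ⟨fun a b hab => Subtype.ext (P.injective (congrArg Subtype.val hab)), ?_⟩
        rw [Fintype.card_coe, Fintype.card_coe, hBcard, hX]
      refine ⟨(Equiv.ofBijective _ hg).trans iso.toEquiv.symm, fun a b => ?_⟩
      show P a.val < P b.val ↔ _
      simp only [Equiv.trans_apply]
      rw [show (iso.toEquiv.symm : _ → Fin κ) = (iso.symm : _ → Fin κ) from rfl]
      rw [OrderIso.lt_iff_lt]
      exact (Subtype.mk_lt_mk).symm
    intro a b
    rw [hF]
    simp only [dif_pos hex]
    exact hex.choose_spec a b
  have hinj : Set.InjOn F (realized S X) := by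
    intro p hp p' hp' h
    funext a b
    exact propext ((spec p hp a b).trans (h ▸ (spec p' hp' a b).symm))
  have hle := Set.ncard_le_ncard_of_injOn F (fun _ _ => Set.mem_univ _) hinj Set.finite_univ
  rwa [Set.ncard_univ, Nat.card_eq_fintype_card,
    Fintype.card_equiv (Fintype.equivFinOfCardEq hc), hc] at hle

/-- Transfer lemma: realized patterns pull back along a surjection compatible with the families. -/
lemma transfer {N N' : ℕ} (S : Set (Equiv.Perm (Fin N'))) (T : Set (Equiv.Perm (Fin N)))
    (X : Finset (Fin N)) (Y : Finset (Fin N')) (φ : ↥X → ↥Y) (hφ : Function.Surjective φ)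
    (H : ∀ P ∈ S, ∃ Q ∈ T, ∀ a b : ↥X, ordOn Q X a b ↔ ordOn P Y (φ a) (φ b))
    (hfin : (realized T X).Finite) :
    (realized S Y).ncard ≤ (realized T X).ncard := by
  set F : (↥Y → ↥Y → Prop) → (↥X → ↥X → Prop) := fun p a b => p (φ a) (φ b) with hF
  have hmap : ∀ p ∈ realized S Y, F p ∈ realized T X := by
    rintro p ⟨P, hP, rfl⟩
    obtain ⟨Q, hQ, hQP⟩ := H P hP
    refine ⟨Q, hQ, ?_⟩
    funext a b
    exact propext (hQP a b)
  have hinj : Set.InjOn F (realized S Y) := by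
    intro p _ p' _ h
    funext u v
    obtain ⟨a, rfl⟩ := hφ u
    obtain ⟨b, rfl⟩ := hφ v
    exact congrFun (congrFun h a) b
  exact Set.ncard_le_ncard_of_injOn F hmap hinj hfin

end Stmt17Aux

open Stmt17Aux in
theorem stmt_17 (n k s : ℕ) (hn : 1 ≤ n) (hk : 2 ≤ k)
    (S : Fin s → Equiv.Perm (Fin (n ^ (k - 1))))
    (hS : ∀ X : Finset (Fin (n ^ (k - 1))), X.card = k →
      TotallyShatters (Set.range S) X) :
    ∃ T : Fin (k * s) → Equiv.Perm (Fin (n ^ k)),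
      ∀ X : Finset (Fin (n ^ k)), X.card = k → TotallyShatters (Set.range T) X := by
  classical
  obtain ⟨m, rfl⟩ : ∃ m, k = m + 1 := ⟨k - 1, by omega⟩
  refine ⟨fun t => QP n m (finProdFinEquiv.symm t).1 (S (finProdFinEquiv.symm t).2), ?_⟩
  set T : Fin ((m + 1) * s) → Equiv.Perm (Fin (n ^ (m + 1))) :=
    fun t => QP n m (finProdFinEquiv.symm t).1 (S (finProdFinEquiv.symm t).2) with hT
  intro X hX
  obtain ⟨j, hj⟩ := exists_dir n m (by omega) X hX
  set Y : Finset (Fin (n ^ m)) := X.image (rho n m j) with hY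
  have hYcard : Y.card = m + 1 := by
    rw [hY, Finset.card_image_of_injOn hj, hX]
  have hSY := hS Y hYcard
  unfold TotallyShatters at hSY ⊢
  rw [hX]
  rw [hYcard] at hSY
  have hfin : (realized (Set.range T) X).Finite :=
    Set.Finite.image _ (Set.finite_range T)
  apply le_antisymm
  · exact upper _ X hX
  · rw [← hSY]
    set φ : ↥X → ↥Y := fun a => ⟨rho n m j a.val, by
      rw [hY]; exact Finset.mem_image_of_mem _ a.2⟩ with hφdef
    have hφ : Function.Surjective φ := by
      rintro ⟨b, hb⟩
      rw [hY] at hb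
      obtain ⟨x, hx, hxb⟩ := Finset.mem_image.1 hb
      exact ⟨⟨x, hx⟩, Subtype.ext hxb⟩
    refine transfer _ _ X Y φ hφ ?_ hfin
    rintro P ⟨i, rfl⟩
    refine ⟨QP n m j (S i), ⟨finProdFinEquiv (j, i), by rw [hT]; simp only [Equiv.symm_apply_apply]⟩, ?_⟩
    intro a b
    show QP n m j (S i) a.val < QP n m j (S i) b.val ↔ S i (φ a).val < S i (φ b).val
    by_cases hab : a = b
    · subst hab; simp
    · have hne : rho n m j a.val ≠ rho n m j b.val := fun h =>
        hab (Subtype.ext (hj (Finset.mem_coe.2 a.2) (Finset.mem_coe.2 b.2) h))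
      exact QP_lt_iff n m j (S i) hne
end

section
/- For any odd t ≥ 3 and n ≥ k ≥ 3: f_k(n, t+1) ≤ 2·f_k(n, t). That is, if t is odd and a family S of permutations of [n] partially shatters every k-subset with t orders, then the family consisting of S together with the reverses of all permutations in S partially shatters every k-subset with at least t+1 orders. -/
/-- `fkt k n t` is the minimum size of a family of permutations of `[n]` which
partially shatters every `k`-subset of `[n]` with at least `t` orders. -/
noncomputable def fkt (k n t : ℕ) : ℕ :=
  sInf {m : ℕ | ∃ S : Finset (Equiv.Perm (Fin n)), S.card = m ∧
    ∀ X : Finset (Fin n), X.card = k → t ≤ (realized ↑S X).ncard}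

lemma even_card_of_invol {α : Type*} [DecidableEq α] (f : α → α) :
    ∀ s : Finset α, (∀ a ∈ s, f a ∈ s) → (∀ a ∈ s, f (f a) = a) →
    (∀ a ∈ s, f a ≠ a) → Even s.card := by
  intro s
  induction s using Finset.strongInduction with
  | _ s ih =>
    intro h1 h2 h3
    rcases s.eq_empty_or_nonempty with rfl | ⟨x, hx⟩
    · simp
    · have hfx : f x ∈ s := h1 x hx
      have hne : f x ≠ x := h3 x hx
      set s' := s \ {x, f x} with hs'
      have hss : s' ⊂ s := Finset.sdiff_ssubset (by
        intro a ha
        simp only [Finset.mem_insert, Finset.mem_singleton] at ha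
        rcases ha with rfl | rfl <;> assumption) ⟨x, by simp⟩
      have h1' : ∀ a ∈ s', f a ∈ s' := by
        intro a ha
        simp only [hs', Finset.mem_sdiff, Finset.mem_insert, Finset.mem_singleton, not_or] at ha ⊢
        obtain ⟨has, hax, hafx⟩ := ha
        refine ⟨h1 a has, ?_, ?_⟩
        · intro h; apply hafx; rw [← h2 a has, h]
        · intro h
          apply hax
          have : f (f a) = f (f x) := by rw [h]
          rwa [h2 a has, h2 x hx] at this
      have hcard : s.card = s'.card + 2 := by
        have hpair : ({x, f x} : Finset α) ⊆ s := by
          intro a ha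
          simp only [Finset.mem_insert, Finset.mem_singleton] at ha
          rcases ha with rfl | rfl <;> assumption
        have : s'.card = s.card - 2 := by
          rw [hs', Finset.card_sdiff_of_subset hpair, Finset.card_pair hne.symm]
        have h2le : 2 ≤ s.card := by
          calc 2 = ({x, f x} : Finset α).card := (Finset.card_pair hne.symm).symm
          _ ≤ s.card := Finset.card_le_card hpair
        omega
      have := ih s' hss h1' (fun a ha => h2 a (hss.subset ha))
        (fun a ha => h3 a (hss.subset ha))
      rw [hcard]
      exact this.add (Even.add_self 1)


open Classical in
lemma key_part {n k t : ℕ} (hk : 3 ≤ k) (hodd : Odd t)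
    (S : Finset (Equiv.Perm (Fin n)))
    (hS : ∀ X : Finset (Fin n), X.card = k → t ≤ (realized ↑S X).ncard)
    (X : Finset (Fin n)) (hX : X.card = k) :
    t + 1 ≤ (realized ↑(S ∪ S.image (fun P => Fin.revPerm * P)) X).ncard := by
  classical
  set T := S ∪ S.image (fun P => Fin.revPerm * P) with hT
  set f : Equiv.Perm (Fin n) → (↥X → ↥X → Prop) := fun P => ordOn P X with hf
  have hre : ∀ Q : Finset (Equiv.Perm (Fin n)), realized ↑Q X = ↑(Q.image f) := by
    intro Q; rw [Finset.coe_image]; rfl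
  set r : (↥X → ↥X → Prop) → (↥X → ↥X → Prop) := fun o a b => o b a with hr
  have hrev2 : ∀ P : Equiv.Perm (Fin n), Fin.revPerm * (Fin.revPerm * P) = P := by
    intro P; ext a; simp [Equiv.Perm.mul_apply, Fin.rev_rev]
  have hA : ∀ P : Equiv.Perm (Fin n), r (f P) = f (Fin.revPerm * P) := by
    intro P; funext a b
    simp only [hr, hf, ordOn, Equiv.Perm.mul_apply, Fin.revPerm_apply, eq_iff_iff]
    exact (Fin.rev_lt_rev).symm
  have hTrev : ∀ P ∈ T, Fin.revPerm * P ∈ T := by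
    intro P hP
    rw [hT, Finset.mem_union] at hP ⊢
    rcases hP with hP | hP
    · exact Or.inr (Finset.mem_image_of_mem _ hP)
    · obtain ⟨Q, hQ, rfl⟩ := Finset.mem_image.mp hP
      exact Or.inl (by rw [hrev2]; exact hQ)
  -- two distinct elements of X
  have h1lt : 1 < X.card := by omega
  obtain ⟨u, hu, v, hv, huv⟩ := Finset.one_lt_card.mp h1lt
  have heven : Even ((T.image f).card) := by
    apply even_card_of_invol r
    · intro a ha
      obtain ⟨P, hP, rfl⟩ := Finset.mem_image.mp ha
      rw [hA]
      exact Finset.mem_image_of_mem _ (hTrev P hP)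
    · intro a _; rfl
    · intro a ha
      obtain ⟨P, hP, rfl⟩ := Finset.mem_image.mp ha
      intro hcon
      have h1 := congrFun (congrFun hcon ⟨u, hu⟩) ⟨v, hv⟩
      simp only [hr, hf, ordOn, eq_iff_iff] at h1
      have hne : P u ≠ P v := fun h => huv (P.injective h)
      rcases lt_or_gt_of_ne hne with h | h
      · exact absurd (h1.mpr h) (lt_asymm h)
      · exact absurd (h1.mp h) (lt_asymm h)
  have hsub : realized ↑S X ⊆ realized ↑T X := by
    apply Set.image_mono
    intro P hP
    exact Finset.mem_union_left _ hP
  have hfin : (realized ↑T X).Finite := by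
    rw [hre]; exact (T.image f).finite_toSet
  have hle : t ≤ (realized ↑T X).ncard :=
    le_trans (hS X hX) (Set.ncard_le_ncard hsub hfin)
  have hne2 : (realized ↑T X).ncard ≠ t := by
    rw [hre, Set.ncard_coe_finset]
    intro h
    rw [h] at heven
    exact (Nat.not_even_iff_odd.mpr hodd) heven
  omega

/-- for odd `t ≥ 3` and `n ≥ k ≥ 3`, `f_k(n,t+1) ≤ 2·f_k(n,t)`; indeed,
if a family `S` partially shatters every `k`-subset with `t` orders, then `S` together
with the reverses of its members partially shatters every `k`-subset with `t+1` orders. -/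
theorem stmt_19 (k n t : ℕ) (hk : 3 ≤ k) (hn : k ≤ n) (ht : 3 ≤ t) (hodd : Odd t) :
    fkt k n (t + 1) ≤ 2 * fkt k n t ∧
    ∀ S : Finset (Equiv.Perm (Fin n)),
      (∀ X : Finset (Fin n), X.card = k → t ≤ (realized ↑S X).ncard) →
      ∀ X : Finset (Fin n), X.card = k →
        t + 1 ≤ (realized ↑(S ∪ S.image (fun P => Fin.revPerm * P)) X).ncard := by
  constructor
  · set A : ℕ → Set ℕ := fun u => {m : ℕ | ∃ S : Finset (Equiv.Perm (Fin n)), S.card = m ∧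
      ∀ X : Finset (Fin n), X.card = k → u ≤ (realized ↑S X).ncard} with hA
    by_cases hne : (A t).Nonempty
    · have hmem := Nat.sInf_mem hne
      obtain ⟨S, hScard, hSprop⟩ := hmem
      set T := S ∪ S.image (fun P => Fin.revPerm * P) with hT
      have hT1 : T.card ∈ A (t + 1) :=
        ⟨T, rfl, fun X hX => key_part hk hodd S hSprop X hX⟩
      have h1 : fkt k n (t + 1) ≤ T.card := Nat.sInf_le hT1
      have h2 : T.card ≤ 2 * fkt k n t := by
        calc T.card ≤ S.card + (S.image (fun P => Fin.revPerm * P)).card :=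
              Finset.card_union_le _ _
          _ ≤ S.card + S.card := by
              exact Nat.add_le_add_left (Finset.card_image_le) _
          _ = 2 * fkt k n t := by
              have : fkt k n t = sInf (A t) := rfl
              omega
      omega
    · have : A (t + 1) = ∅ := by
        rw [Set.eq_empty_iff_forall_notMem]
        rintro m ⟨S, hc, hp⟩
        exact hne ⟨m, S, hc, fun X hX => le_trans (by omega) (hp X hX)⟩
      show sInf (A (t+1)) ≤ 2 * sInf (A t)
      rw [this, Nat.sInf_empty]
      omega
  · intro S hS X hX
    exact key_part hk hodd S hS X hX
end
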